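/- arXiv:2210.10847 — 3 statements merged into one kernel-verified Lean document; each statement's English description precedes it below -/
import Mathlib

section
/- Let x: U → ℝ³ be a proper frontal and let Ω and Ω̃ be any two tangent moving bases of x. Then for every q ∈ U one has K_Ω(q) = 0 if and only if K_Ω̃(q) = 0; consequently K_Ω vanishes nowhere on U if and only if K_Ω̃ vanishes nowhere on U, i.e. the notion of non-parabolicity is independent of the choice of tangent moving basis. -/
open Matrix Topology Filter

noncomputable section

/-- Vectors in ℝ³. -/
abbrev V3 : Type := Fin 3 → ℝ

/-- The Euclidean dot product on ℝ³. -/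
def dot3 (v w : V3) : ℝ := v 0 * w 0 + v 1 * w 1 + v 2 * w 2

/-- The cross product on ℝ³. -/
def cross3 (v w : V3) : V3 :=
  ![v 1 * w 2 - v 2 * w 1, v 2 * w 0 - v 0 * w 2, v 0 * w 1 - v 1 * w 0]

/-- Partial derivative in the `u₁` direction. -/
def pd1 {E : Type*} [NormedAddCommGroup E] [NormedSpace ℝ E]
    (f : ℝ × ℝ → E) (q : ℝ × ℝ) : E := fderiv ℝ f q (1, 0)

/-- Partial derivative in the `u₂` direction. -/
def pd2 {E : Type*} [NormedAddCommGroup E] [NormedSpace ℝ E]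
    (f : ℝ × ℝ → E) (q : ℝ × ℝ) : E := fderiv ℝ f q (0, 1)

/-- The singular set `Σ(x)` of `x` on `U`. -/
def SingSet (x : ℝ × ℝ → V3) (U : Set (ℝ × ℝ)) : Set (ℝ × ℝ) :=
  {q ∈ U | ¬ LinearIndependent ℝ ![pd1 x q, pd2 x q]}

/-- `x` is a frontal on the open set `U`, with smooth unit normal field `n`. -/
def IsFrontal (x n : ℝ × ℝ → V3) (U : Set (ℝ × ℝ)) : Prop :=
  IsOpen U ∧ ContDiffOn ℝ (⊤ : ℕ∞) x U ∧ ContDiffOn ℝ (⊤ : ℕ∞) n U ∧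
  (∀ q ∈ U, dot3 (n q) (n q) = 1) ∧
  (∀ q ∈ U, dot3 (pd1 x q) (n q) = 0 ∧ dot3 (pd2 x q) (n q) = 0)

/-- `x` is proper: its singular set has empty interior. -/
def IsProper (x : ℝ × ℝ → V3) (U : Set (ℝ × ℝ)) : Prop :=
  interior (SingSet x U) = ∅

/-- `(w1 w2)` is a tangent moving basis of `x` on `U`. -/
def IsTMB (x w1 w2 : ℝ × ℝ → V3) (U : Set (ℝ × ℝ)) : Prop :=
  ContDiffOn ℝ (⊤ : ℕ∞) w1 U ∧ ContDiffOn ℝ (⊤ : ℕ∞) w2 U ∧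
  (∀ q ∈ U, LinearIndependent ℝ ![w1 q, w2 q]) ∧
  (∀ q ∈ U, pd1 x q ∈ Submodule.span ℝ {w1 q, w2 q} ∧
            pd2 x q ∈ Submodule.span ℝ {w1 q, w2 q})

/-- The unit normal induced by a tangent moving basis: `w₁ × w₂ / ‖w₁ × w₂‖`. -/
def inducedNormal (w1 w2 : ℝ × ℝ → V3) (q : ℝ × ℝ) : V3 :=
  (Real.sqrt (dot3 (cross3 (w1 q) (w2 q)) (cross3 (w1 q) (w2 q))))⁻¹ •
    cross3 (w1 q) (w2 q)

/-- The matrix `I_Ω = Ωᵀ Ω`. -/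
def IOmega (w1 w2 : ℝ × ℝ → V3) (q : ℝ × ℝ) : Matrix (Fin 2) (Fin 2) ℝ :=
  !![dot3 (w1 q) (w1 q), dot3 (w1 q) (w2 q);
     dot3 (w2 q) (w1 q), dot3 (w2 q) (w2 q)]

/-- The matrix `II_Ω`, with `(II_Ω)ᵢⱼ = ⟨(wᵢ)_{uⱼ}, n⟩` for the induced normal `n`. -/
def IIOmega (w1 w2 : ℝ × ℝ → V3) (q : ℝ × ℝ) : Matrix (Fin 2) (Fin 2) ℝ :=
  !![dot3 (pd1 w1 q) (inducedNormal w1 w2 q), dot3 (pd2 w1 q) (inducedNormal w1 w2 q);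
     dot3 (pd1 w2 q) (inducedNormal w1 w2 q), dot3 (pd2 w2 q) (inducedNormal w1 w2 q)]

/-- The Ω-relative curvature `K_Ω = det (−II_Ωᵀ I_Ω⁻¹)`. -/
def relK (w1 w2 : ℝ × ℝ → V3) (q : ℝ × ℝ) : ℝ :=
  (-(IIOmega w1 w2 q)ᵀ * (IOmega w1 w2 q)⁻¹).det

/-- The tangent plane at a regular point, `span{x_{u₁}, x_{u₂}}`. -/
def tangentSpan (x : ℝ × ℝ → V3) (q : ℝ × ℝ) : Submodule ℝ V3 :=
  Submodule.span ℝ {pd1 x q, pd2 x q}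

/-- The Gaussian curvature `K = (eg − f²)/(EG − F²)` w.r.t. the unit normal `n`. -/
def gaussK (x n : ℝ × ℝ → V3) (q : ℝ × ℝ) : ℝ :=
  (dot3 (pd1 (pd1 x) q) (n q) * dot3 (pd2 (pd2 x) q) (n q)
      - dot3 (pd2 (pd1 x) q) (n q) ^ 2) /
    (dot3 (pd1 x q) (pd1 x q) * dot3 (pd2 x q) (pd2 x q)
      - dot3 (pd1 x q) (pd2 x q) ^ 2)

/-- `ξ` is the usual Blaschke normal vector field of `x` on the (regular) set `R`:
`⟨ξ, n⟩ = |K|^{1/4}`, its tangential part `W = ξ − ⟨ξ,n⟩n` is tangent, and `ξ` is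
equiaffine (its partial derivatives are tangent), which encodes `II(W, X) = −X(|K|^{1/4})`. -/
def IsUsualBlaschkeOn (x n ξ : ℝ × ℝ → V3) (R : Set (ℝ × ℝ)) : Prop :=
  ∀ q ∈ R,
    dot3 (ξ q) (n q) = |gaussK x n q| ^ ((4 : ℝ)⁻¹) ∧
    (ξ q - dot3 (ξ q) (n q) • n q ∈ tangentSpan x q) ∧
    pd1 ξ q ∈ tangentSpan x q ∧ pd2 ξ q ∈ tangentSpan x q

/-- `ξ` is the Blaschke vector field of the frontal `x`: a smooth extension to `U` of
the usual Blaschke vector field defined on the regular part `U ∖ Σ(x)`. -/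
def IsBlaschkeField (x n ξ : ℝ × ℝ → V3) (U : Set (ℝ × ℝ)) : Prop :=
  ContDiffOn ℝ (⊤ : ℕ∞) ξ U ∧ IsUsualBlaschkeOn x n ξ (U \ SingSet x U)

/-- Entrywise partial derivative of a matrix-valued map, in the `u₁` direction. -/
def pdMat1 {m n : Type*} (M : ℝ × ℝ → Matrix m n ℝ) (q : ℝ × ℝ) : Matrix m n ℝ :=
  Matrix.of fun i j => pd1 (fun u => M u i j) q

/-- Entrywise partial derivative of a matrix-valued map, in the `u₂` direction. -/
def pdMat2 {m n : Type*} (M : ℝ × ℝ → Matrix m n ℝ) (q : ℝ × ℝ) : Matrix m n ℝ :=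
  Matrix.of fun i j => pd2 (fun u => M u i j) q


/-! ### Auxiliary lemmas -/

section Aux

lemma dot3_comm (v w : V3) : dot3 v w = dot3 w v := by simp only [dot3]; ring

lemma dot3_smul_left (a : ℝ) (v w : V3) : dot3 (a • v) w = a * dot3 v w := by
  simp only [dot3, Pi.smul_apply, smul_eq_mul]; ring

lemma dot3_smul_right (a : ℝ) (v w : V3) : dot3 v (a • w) = a * dot3 v w := by
  simp only [dot3, Pi.smul_apply, smul_eq_mul]; ring

lemma dot3_comb_left (a b : ℝ) (v w z : V3) :
    dot3 (a • v + b • w) z = a * dot3 v z + b * dot3 w z := by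
  simp only [dot3, Pi.add_apply, Pi.smul_apply, smul_eq_mul]; ring

lemma dot3_comb_right (a b : ℝ) (v w z : V3) :
    dot3 z (a • v + b • w) = a * dot3 z v + b * dot3 z w := by
  simp only [dot3, Pi.add_apply, Pi.smul_apply, smul_eq_mul]; ring

lemma dot3_self_nonneg (v : V3) : 0 ≤ dot3 v v := by
  simp only [dot3]; nlinarith [mul_self_nonneg (v 0), mul_self_nonneg (v 1), mul_self_nonneg (v 2)]

lemma dot3_self_eq_zero {v : V3} (h : dot3 v v = 0) : v = 0 := by
  simp only [dot3] at h
  funext i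
  fin_cases i <;> simp <;>
    nlinarith [mul_self_nonneg (v 0), mul_self_nonneg (v 1), mul_self_nonneg (v 2)]

lemma lagrange (v w : V3) :
    dot3 (cross3 v w) (cross3 v w) = dot3 v v * dot3 w w - dot3 v w ^ 2 := by
  simp only [dot3, cross3]
  simp only [Matrix.cons_val_zero, Matrix.cons_val_one, Matrix.head_cons,
    Matrix.cons_val_two, Matrix.tail_cons]
  ring

lemma cross3_dot_left (v w : V3) : dot3 (cross3 v w) v = 0 := by
  simp only [dot3, cross3, Matrix.cons_val_zero, Matrix.cons_val_one, Matrix.head_cons,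
    Matrix.cons_val_two, Matrix.tail_cons]
  ring

lemma cross3_dot_right (v w : V3) : dot3 (cross3 v w) w = 0 := by
  simp only [dot3, cross3, Matrix.cons_val_zero, Matrix.cons_val_one, Matrix.head_cons,
    Matrix.cons_val_two, Matrix.tail_cons]
  ring

lemma decomp (v w u : V3) :
    (dot3 (cross3 v w) (cross3 v w)) • u =
      dot3 u (cross3 v w) • cross3 v w +
      (dot3 u v * dot3 w w - dot3 u w * dot3 v w) • v +
      (dot3 u w * dot3 v v - dot3 u v * dot3 v w) • w := by
  funext i
  fin_cases i <;>
    · simp only [Pi.add_apply, Pi.smul_apply, smul_eq_mul]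
      simp [cross3, dot3]
      ring

lemma gram_ne {v w : V3} (h : LinearIndependent ℝ ![v, w]) :
    dot3 v v * dot3 w w - dot3 v w ^ 2 ≠ 0 := by
  intro h0
  rw [LinearIndependent.pair_iff] at h
  by_cases hv : dot3 v v = 0
  · have hv0 : v = 0 := dot3_self_eq_zero hv
    have := (h 1 0 (by simp [hv0])).1
    norm_num at this
  · have hz : dot3 ((dot3 v v) • w - (dot3 v w) • v) ((dot3 v v) • w - (dot3 v w) • v) = 0 := by
      simp only [dot3, Pi.sub_apply, Pi.smul_apply, smul_eq_mul] at *
      nlinarith [h0]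
    have hz' := dot3_self_eq_zero hz
    have := h (- dot3 v w) (dot3 v v)
      (by rw [sub_eq_zero] at hz'; rw [neg_smul, neg_add_eq_zero]; exact hz'.symm)
    exact hv this.2

lemma gram_pos {v w : V3} (h : LinearIndependent ℝ ![v, w]) :
    0 < dot3 v v * dot3 w w - dot3 v w ^ 2 := by
  have h1 : 0 ≤ dot3 v v * dot3 w w - dot3 v w ^ 2 := by
    rw [← lagrange]; exact dot3_self_nonneg (cross3 v w)
  rcases lt_or_eq_of_le h1 with h' | h'
  · exact h'
  · exact absurd h'.symm (gram_ne h)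

lemma cc_pos {v w : V3} (h : LinearIndependent ℝ ![v, w]) :
    0 < dot3 (cross3 v w) (cross3 v w) := by
  rw [lagrange]; exact gram_pos h

lemma exists_coeff {v w u : V3} (h : LinearIndependent ℝ ![v, w])
    (hu : dot3 u (cross3 v w) = 0) : ∃ a b : ℝ, u = a • v + b • w := by
  have hcc := cc_pos h
  have hd := decomp v w u
  rw [hu, zero_smul, zero_add] at hd
  set cc := dot3 (cross3 v w) (cross3 v w) with hccdef
  refine ⟨cc⁻¹ * (dot3 u v * dot3 w w - dot3 u w * dot3 v w),
          cc⁻¹ * (dot3 u w * dot3 v v - dot3 u v * dot3 v w), ?_⟩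
  have h2 : u = cc⁻¹ • (cc • u) := by rw [smul_smul, inv_mul_cancel₀ hcc.ne', one_smul]
  calc u = cc⁻¹ • (cc • u) := h2
    _ = _ := by rw [hd, smul_add, smul_smul, smul_smul]

section Diff
variable {f g : ℝ × ℝ → V3} {q : ℝ × ℝ}

lemma DifferentiableAt.dot3' (hf : DifferentiableAt ℝ f q) (hg : DifferentiableAt ℝ g q) :
    DifferentiableAt ℝ (fun u => dot3 (f u) (g u)) q := by
  have hfi := differentiableAt_pi.1 hf
  have hgi := differentiableAt_pi.1 hg
  exact (((hfi 0).mul (hgi 0)).add ((hfi 1).mul (hgi 1))).add ((hfi 2).mul (hgi 2))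

lemma DifferentiableAt.cross3' (hf : DifferentiableAt ℝ f q) (hg : DifferentiableAt ℝ g q) :
    DifferentiableAt ℝ (fun u => cross3 (f u) (g u)) q := by
  have hfi := differentiableAt_pi.1 hf
  have hgi := differentiableAt_pi.1 hg
  apply differentiableAt_pi.2
  intro i
  fin_cases i <;>
    simp only [cross3, Matrix.cons_val_zero, Matrix.cons_val_one, Matrix.head_cons,
      Matrix.cons_val_two, Matrix.tail_cons, Fin.isValue] <;>
    exact ((hfi _).mul (hgi _)).sub ((hfi _).mul (hgi _))

lemma fderiv_dot3_apply (hf : DifferentiableAt ℝ f q) (hg : DifferentiableAt ℝ g q) (v : ℝ × ℝ) :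
    fderiv ℝ (fun u => dot3 (f u) (g u)) q v =
      dot3 (fderiv ℝ f q v) (g q) + dot3 (f q) (fderiv ℝ g q v) := by
  have hfi := differentiableAt_pi.1 hf
  have hgi := differentiableAt_pi.1 hg
  have hfd : ∀ i, fderiv ℝ f q v i = fderiv ℝ (fun u => f u i) q v := by
    intro i; rw [fderiv_pi hfi]; rfl
  have hgd : ∀ i, fderiv ℝ g q v i = fderiv ℝ (fun u => g u i) q v := by
    intro i; rw [fderiv_pi hgi]; rfl
  have H : HasFDerivAt (fun u => dot3 (f u) (g u))
      ((((f q 0 • fderiv ℝ (fun u => g u 0) q + g q 0 • fderiv ℝ (fun u => f u 0) q) +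
        (f q 1 • fderiv ℝ (fun u => g u 1) q + g q 1 • fderiv ℝ (fun u => f u 1) q)) +
        (f q 2 • fderiv ℝ (fun u => g u 2) q + g q 2 • fderiv ℝ (fun u => f u 2) q))) q :=
    ((((hfi 0).hasFDerivAt.mul (hgi 0).hasFDerivAt).add
      ((hfi 1).hasFDerivAt.mul (hgi 1).hasFDerivAt)).add
      ((hfi 2).hasFDerivAt.mul (hgi 2).hasFDerivAt))
  rw [show (fun u => dot3 (f u) (g u)) =
    (fun u => f u 0 * g u 0 + f u 1 * g u 1 + f u 2 * g u 2) from rfl] at *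
  rw [H.fderiv]
  simp only [ContinuousLinearMap.add_apply, ContinuousLinearMap.smul_apply, smul_eq_mul, dot3,
    hfd, hgd]
  ring

end Diff

/-- The induced normal is orthogonal to `w1`. -/
lemma inducedNormal_dot_w1 (w1 w2 : ℝ × ℝ → V3) (q : ℝ × ℝ) :
    dot3 (inducedNormal w1 w2 q) (w1 q) = 0 := by
  unfold inducedNormal
  rw [dot3_smul_left, cross3_dot_left, mul_zero]

lemma inducedNormal_dot_w2 (w1 w2 : ℝ × ℝ → V3) (q : ℝ × ℝ) :
    dot3 (inducedNormal w1 w2 q) (w2 q) = 0 := by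
  unfold inducedNormal
  rw [dot3_smul_left, cross3_dot_right, mul_zero]

lemma inducedNormal_dot_self {w1 w2 : ℝ × ℝ → V3} {q : ℝ × ℝ}
    (h : LinearIndependent ℝ ![w1 q, w2 q]) :
    dot3 (inducedNormal w1 w2 q) (inducedNormal w1 w2 q) = 1 := by
  have hcc := cc_pos h
  set cc := dot3 (cross3 (w1 q) (w2 q)) (cross3 (w1 q) (w2 q)) with hccdef
  have hs : Real.sqrt cc > 0 := Real.sqrt_pos.2 hcc
  unfold inducedNormal
  rw [dot3_smul_left, dot3_smul_right, ← hccdef]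
  rw [show (Real.sqrt cc)⁻¹ * ((Real.sqrt cc)⁻¹ * cc) = cc / (Real.sqrt cc * Real.sqrt cc) by
    field_simp]
  rw [Real.mul_self_sqrt hcc.le, div_self hcc.ne']

lemma inducedNormal_differentiableAt {w1 w2 : ℝ × ℝ → V3} {q : ℝ × ℝ}
    (hw1 : DifferentiableAt ℝ w1 q) (hw2 : DifferentiableAt ℝ w2 q)
    (h : LinearIndependent ℝ ![w1 q, w2 q]) :
    DifferentiableAt ℝ (inducedNormal w1 w2) q := by
  have hc : DifferentiableAt ℝ (fun u => cross3 (w1 u) (w2 u)) q := hw1.cross3' hw2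
  have hd : DifferentiableAt ℝ
      (fun u => dot3 (cross3 (w1 u) (w2 u)) (cross3 (w1 u) (w2 u))) q := hc.dot3' hc
  have hcc := cc_pos h
  have hsq : DifferentiableAt ℝ
      (fun u => Real.sqrt (dot3 (cross3 (w1 u) (w2 u)) (cross3 (w1 u) (w2 u)))) q :=
    hd.sqrt hcc.ne'
  have hsne : Real.sqrt (dot3 (cross3 (w1 q) (w2 q)) (cross3 (w1 q) (w2 q))) ≠ 0 :=
    (Real.sqrt_pos.2 hcc).ne'
  exact (hsq.inv hsne).smul hc

/-- Two unit vectors orthogonal to a linearly independent pair have dot product `±1`. -/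
lemma unit_normal_pm {v w N N' : V3} (h : LinearIndependent ℝ ![v, w])
    (hN : dot3 N N = 1) (hN' : dot3 N' N' = 1)
    (hNv : dot3 N v = 0) (hNw : dot3 N w = 0)
    (hN'v : dot3 N' v = 0) (hN'w : dot3 N' w = 0) :
    dot3 N N' = 1 ∨ dot3 N N' = -1 := by
  have hcc := cc_pos h
  set c := cross3 v w with hc
  set cc := dot3 c c with hccdef
  have hdN := decomp v w N
  rw [hNv, hNw] at hdN
  simp only [zero_mul, mul_zero, sub_zero, zero_sub, neg_zero, sub_self,
    zero_smul, add_zero] at hdN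
  have hdN' := decomp v w N'
  rw [hN'v, hN'w] at hdN'
  simp only [zero_mul, mul_zero, sub_zero, zero_sub, neg_zero, sub_self,
    zero_smul, add_zero] at hdN'
  set γ := dot3 N c with hγdef
  set γ' := dot3 N' c with hγ'def
  have e1 : cc * cc * dot3 N N = γ * γ * cc := by
    have := congrArg (fun z => dot3 z z) hdN
    simpa only [dot3_smul_left, dot3_smul_right, ← hccdef, mul_assoc, mul_left_comm,
      mul_comm] using this
  have e2 : cc * cc * dot3 N' N' = γ' * γ' * cc := by
    have := congrArg (fun z => dot3 z z) hdN'
    simpa only [dot3_smul_left, dot3_smul_right, ← hccdef, mul_assoc, mul_left_comm,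
      mul_comm] using this
  have e3 : cc * cc * dot3 N N' = γ * γ' * cc := by
    have : dot3 (cc • N) (cc • N') = dot3 (γ • c) (γ' • c) := by rw [hdN, hdN']
    simpa only [dot3_smul_left, dot3_smul_right, ← hccdef, mul_assoc, mul_left_comm,
      mul_comm] using this
  rw [hN] at e1
  rw [hN'] at e2
  have ht : dot3 N N' * dot3 N N' = 1 := by
    have hcc2 : cc ≠ 0 := hcc.ne'
    have hγ2 : γ * γ = cc := mul_right_cancel₀ hcc2 (by linear_combination (-1 : ℝ) * e1)
    have hγ'2 : γ' * γ' = cc := mul_right_cancel₀ hcc2 (by linear_combination (-1 : ℝ) * e2)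
    have h4 : (dot3 N N' * dot3 N N') * (cc * cc * (cc * cc)) = 1 * (cc * cc * (cc * cc)) := by
      linear_combination (cc * cc * dot3 N N' + γ * γ' * cc) * e3 +
        (cc * cc * γ' * γ') * hγ2 + (cc * cc * cc) * hγ'2
    exact mul_right_cancel₀ (by positivity : cc * cc * (cc * cc) ≠ 0) h4
  exact mul_self_eq_one_iff.1 ht

lemma eq_smul_of_unit {N N' : V3} (hN : dot3 N N = 1) (hN' : dot3 N' N' = 1)
    {s : ℝ} (hs : dot3 N N' = s) (hs2 : s * s = 1) : N' = s • N := by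
  have h : dot3 (N' - s • N) (N' - s • N) = 0 := by
    simp only [dot3, Pi.sub_apply, Pi.smul_apply, smul_eq_mul] at hN hN' hs ⊢
    linear_combination hN' - (2 * s) * hs + (s * s) * hN - hs2
  have := dot3_self_eq_zero h
  rwa [sub_eq_zero] at this

/-- Density of the regular set. -/
lemma dense_reg {U : Set (ℝ × ℝ)} {x : ℝ × ℝ → V3} (hU : IsOpen U)
    (hpr : IsProper x U) {q : ℝ × ℝ} (hq : q ∈ U) :
    q ∈ closure (U \ SingSet x U) := by
  by_contra h
  rw [mem_closure_iff] at h
  push_neg at h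
  obtain ⟨o, ho, hqo, hno⟩ := h
  have hsub : o ∩ U ⊆ SingSet x U := by
    intro y hy
    by_contra hy'
    exact (Set.not_nonempty_iff_eq_empty.2 hno) ⟨y, hy.1, hy.2, hy'⟩
  have : o ∩ U ⊆ interior (SingSet x U) :=
    (ho.inter hU).subset_interior_iff.2 hsub
  rw [hpr] at this
  exact this ⟨hqo, hq⟩

lemma relK_zero_iff {w1 w2 : ℝ × ℝ → V3} {q : ℝ × ℝ}
    (h : LinearIndependent ℝ ![w1 q, w2 q]) :
    (relK w1 w2 q = 0 ↔ (IIOmega w1 w2 q).det = 0) := by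
  have hI : (IOmega w1 w2 q).det ≠ 0 := by
    rw [IOmega, Matrix.det_fin_two_of, dot3_comm (w2 q) (w1 q)]
    have := gram_ne h
    rw [pow_two] at this
    intro h0
    exact this (by linarith)
  unfold relK
  rw [Matrix.det_mul, Matrix.det_neg, Matrix.det_transpose, Matrix.det_nonsing_inv]
  simp only [Fintype.card_fin, Ring.inverse_eq_inv']
  constructor
  · intro h0
    rcases mul_eq_zero.1 h0 with h1 | h1
    · rcases mul_eq_zero.1 h1 with h2 | h2
      · norm_num at h2
      · exact h2
    · exact absurd h1 (inv_ne_zero hI)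
  · intro h0
    rw [h0]
    ring

end Aux


/-- Key lemma: vanishing of `det II` transfers from one tmb to another. -/
lemma key_det {U : Set (ℝ × ℝ)} {x w1 w2 w1' w2' : ℝ × ℝ → V3}
    (hU : IsOpen U) (hpr : IsProper x U)
    (hΩ : IsTMB x w1 w2 U) (hΩ' : IsTMB x w1' w2' U)
    {q : ℝ × ℝ} (hq : q ∈ U) (h0 : (IIOmega w1 w2 q).det = 0) :
    (IIOmega w1' w2' q).det = 0 := by
  set N : ℝ × ℝ → V3 := inducedNormal w1 w2 with hNdef
  set N' : ℝ × ℝ → V3 := inducedNormal w1' w2' with hN'def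
  have hdiff : ∀ (w : ℝ × ℝ → V3), ContDiffOn ℝ (⊤ : ℕ∞) w U → ∀ q' ∈ U, DifferentiableAt ℝ w q' :=
    fun w hw q' hq' => (hw.contDiffAt (hU.mem_nhds hq')).differentiableAt (by simp)
  have hw1d := hdiff w1 hΩ.1
  have hw2d := hdiff w2 hΩ.2.1
  have hw1'd := hdiff w1' hΩ'.1
  have hw2'd := hdiff w2' hΩ'.2.1
  have hNd : ∀ q' ∈ U, DifferentiableAt ℝ N q' := fun q' h =>
    inducedNormal_differentiableAt (hw1d q' h) (hw2d q' h) (hΩ.2.2.1 q' h)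
  have hN'd : ∀ q' ∈ U, DifferentiableAt ℝ N' q' := fun q' h =>
    inducedNormal_differentiableAt (hw1'd q' h) (hw2'd q' h) (hΩ'.2.2.1 q' h)
  -- unitness
  have hNu : ∀ q' ∈ U, dot3 (N q') (N q') = 1 := fun q' h =>
    inducedNormal_dot_self (hΩ.2.2.1 q' h)
  have hN'u : ∀ q' ∈ U, dot3 (N' q') (N' q') = 1 := fun q' h =>
    inducedNormal_dot_self (hΩ'.2.2.1 q' h)
  -- on the regular set, the two normals agree up to sign
  have hreg : ∀ q' ∈ U \ SingSet x U,
      dot3 (N q') (N' q') = 1 ∨ dot3 (N q') (N' q') = -1 := by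
    intro q' hq'
    have hq'U : q' ∈ U := hq'.1
    have hli : LinearIndependent ℝ ![pd1 x q', pd2 x q'] := by
      by_contra h
      exact hq'.2 ⟨hq'U, h⟩
    have hperp : ∀ (M : ℝ × ℝ → V3) (wa wb : ℝ × ℝ → V3),
        (dot3 (M q') (wa q') = 0) → (dot3 (M q') (wb q') = 0) →
        (pd1 x q' ∈ Submodule.span ℝ {wa q', wb q'}) →
        (pd2 x q' ∈ Submodule.span ℝ {wa q', wb q'}) →
        dot3 (M q') (pd1 x q') = 0 ∧ dot3 (M q') (pd2 x q') = 0 := by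
      intro M wa wb h1 h2 h3 h4
      obtain ⟨s, t, hst⟩ := Submodule.mem_span_pair.1 h3
      obtain ⟨s', t', hst'⟩ := Submodule.mem_span_pair.1 h4
      constructor
      · rw [← hst, dot3_comb_right, h1, h2]; ring
      · rw [← hst', dot3_comb_right, h1, h2]; ring
    have hP := hperp N w1 w2 (inducedNormal_dot_w1 w1 w2 q') (inducedNormal_dot_w2 w1 w2 q')
      (hΩ.2.2.2 q' hq'U).1 (hΩ.2.2.2 q' hq'U).2
    have hP' := hperp N' w1' w2' (inducedNormal_dot_w1 w1' w2' q')
      (inducedNormal_dot_w2 w1' w2' q') (hΩ'.2.2.2 q' hq'U).1 (hΩ'.2.2.2 q' hq'U).2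
    exact unit_normal_pm hli (hNu q' hq'U) (hN'u q' hq'U) hP.1 hP.2 hP'.1 hP'.2
  -- everywhere on U, the dot product is ±1
  have hfpm : ∀ q' ∈ U, dot3 (N q') (N' q') = 1 ∨ dot3 (N q') (N' q') = -1 := by
    intro q' hq'
    have hcl : q' ∈ closure (U \ SingSet x U) := dense_reg hU hpr hq'
    have hcont : ContinuousWithinAt (fun u => dot3 (N u) (N' u)) (U \ SingSet x U) q' :=
      (((hNd q' hq').dot3' (hN'd q' hq')).continuousAt).continuousWithinAt
    have himg := hcont.mem_closure_image hcl
    have hsub : (fun u => dot3 (N u) (N' u)) '' (U \ SingSet x U) ⊆ ({1, -1} : Set ℝ) := by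
      rintro y ⟨z, hz, rfl⟩
      rcases hreg z hz with h | h
      · exact Or.inl h
      · exact Or.inr h
    have hclosed : IsClosed ({1, -1} : Set ℝ) := (Set.toFinite _).isClosed
    have : dot3 (N q') (N' q') ∈ ({1, -1} : Set ℝ) := by
      have := closure_mono hsub himg
      rwa [hclosed.closure_eq] at this
    exact this
  set ε : ℝ := dot3 (N q) (N' q) with hεdef
  have hε2 : ε * ε = 1 := by rcases hfpm q hq with h | h <;> rw [← hεdef] at h <;> rw [h] <;> norm_num
  -- N' = ε • N eventually near q
  have hNN' : ∀ q' ∈ U, N' q' = dot3 (N q') (N' q') • N q' := by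
    intro q' hq'
    have h2 : dot3 (N q') (N' q') * dot3 (N q') (N' q') = 1 := by
      rcases hfpm q' hq' with h | h <;> rw [h] <;> norm_num
    exact eq_smul_of_unit (hNu q' hq') (hN'u q' hq') rfl h2
  have hev : N' =ᶠ[𝓝 q] fun u => ε • N u := by
    have hc : ContinuousAt (fun u => dot3 (N u) (N' u)) q :=
      ((hNd q hq).dot3' (hN'd q hq)).continuousAt
    have h1 : ∀ᶠ u in 𝓝 q, dot3 (N u) (N' u) ∈ Set.Ioo (ε - 1) (ε + 1) := by
      apply hc.preimage_mem_nhds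
      exact isOpen_Ioo.mem_nhds (by constructor <;> simp [hεdef])
    have h2 : ∀ᶠ u in 𝓝 q, u ∈ U := hU.mem_nhds hq
    filter_upwards [h1, h2] with u hu1 hu2
    have h3 : dot3 (N u) (N' u) = ε := by
      rw [hεdef] at hu1 ⊢
      rcases hfpm u hu2 with h | h <;> rcases hfpm q hq with h' | h' <;> rw [h, h'] <;>
        (rw [h, h'] at hu1; exfalso; simp only [Set.mem_Ioo] at hu1; norm_num at hu1)
    rw [hNN' u hu2, h3]
  have hpdN' : ∀ v : ℝ × ℝ, fderiv ℝ N' q v = ε • fderiv ℝ N q v := by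
    intro v
    rw [hev.fderiv_eq, fderiv_fun_const_smul (hNd q hq) ε]
    rfl
  -- coefficients of w1', w2' at q in terms of w1, w2
  have hNq : N q = (Real.sqrt (dot3 (cross3 (w1 q) (w2 q)) (cross3 (w1 q) (w2 q))))⁻¹ •
      cross3 (w1 q) (w2 q) := rfl
  have hcoeff : ∀ (wi : ℝ × ℝ → V3), dot3 (N' q) (wi q) = 0 →
      ∃ a b : ℝ, wi q = a • w1 q + b • w2 q := by
    intro wi hwi
    apply exists_coeff (hΩ.2.2.1 q hq)
    have hcc := cc_pos (hΩ.2.2.1 q hq)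
    have hsne : Real.sqrt (dot3 (cross3 (w1 q) (w2 q)) (cross3 (w1 q) (w2 q))) ≠ 0 :=
      (Real.sqrt_pos.2 hcc).ne'
    have hεne : ε ≠ 0 := by
      intro h; rw [h] at hε2; norm_num at hε2
    have h1 : dot3 (wi q) (N' q) = 0 := by rw [dot3_comm]; exact hwi
    rw [hNN' q hq, ← hεdef, hNq, dot3_smul_right, dot3_smul_right] at h1
    have h2 := mul_eq_zero.1 h1
    rcases h2 with h2 | h2
    · exact absurd h2 hεne
    · rcases mul_eq_zero.1 h2 with h3 | h3
      · exact absurd h3 (inv_ne_zero hsne)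
      · exact h3
  obtain ⟨a1, b1, ha1⟩ := hcoeff w1' (inducedNormal_dot_w1 w1' w2' q)
  obtain ⟨a2, b2, ha2⟩ := hcoeff w2' (inducedNormal_dot_w2 w1' w2' q)
  -- product rule: entries of II in terms of derivative of the normal
  have hzero : ∀ (M w : ℝ × ℝ → V3), (∀ u ∈ U, dot3 (w u) (M u) = 0) →
      DifferentiableAt ℝ w q → DifferentiableAt ℝ M q → ∀ v : ℝ × ℝ,
      dot3 (fderiv ℝ w q v) (M q) = - dot3 (w q) (fderiv ℝ M q v) := by
    intro M w hwM hwd hMd v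
    have h1 : (fun u => dot3 (w u) (M u)) =ᶠ[𝓝 q] fun _ => (0 : ℝ) :=
      Filter.eventuallyEq_of_mem (hU.mem_nhds hq) hwM
    have h2 : fderiv ℝ (fun u => dot3 (w u) (M u)) q = 0 := by
      rw [h1.fderiv_eq]; exact fderiv_const_apply 0
    have h3 := fderiv_dot3_apply hwd hMd v
    rw [h2] at h3
    simp only [ContinuousLinearMap.zero_apply] at h3
    linarith [h3]
  -- abbreviations for the entries
  set P11 : ℝ := dot3 (w1 q) (fderiv ℝ N q (1, 0)) with hP11
  set P12 : ℝ := dot3 (w2 q) (fderiv ℝ N q (1, 0)) with hP12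
  set P21 : ℝ := dot3 (w1 q) (fderiv ℝ N q (0, 1)) with hP21
  set P22 : ℝ := dot3 (w2 q) (fderiv ℝ N q (0, 1)) with hP22
  have horthN : ∀ u ∈ U, dot3 (w1 u) (N u) = 0 := fun u _ => by
    rw [dot3_comm]; exact inducedNormal_dot_w1 w1 w2 u
  have horthN2 : ∀ u ∈ U, dot3 (w2 u) (N u) = 0 := fun u _ => by
    rw [dot3_comm]; exact inducedNormal_dot_w2 w1 w2 u
  have horthN1' : ∀ u ∈ U, dot3 (w1' u) (N' u) = 0 := fun u _ => by
    rw [dot3_comm]; exact inducedNormal_dot_w1 w1' w2' u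
  have horthN2' : ∀ u ∈ U, dot3 (w2' u) (N' u) = 0 := fun u _ => by
    rw [dot3_comm]; exact inducedNormal_dot_w2 w1' w2' u
  have h0' : (- P11) * (- P22) - (- P21) * (- P12) = 0 := by
    rw [IIOmega, Matrix.det_fin_two_of] at h0
    unfold pd1 pd2 at h0
    rw [hzero N w1 horthN (hw1d q hq) (hNd q hq) (1, 0),
        hzero N w1 horthN (hw1d q hq) (hNd q hq) (0, 1),
        hzero N w2 horthN2 (hw2d q hq) (hNd q hq) (1, 0),
        hzero N w2 horthN2 (hw2d q hq) (hNd q hq) (0, 1)] at h0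
    linear_combination h0
  -- now compute the entries of II'
  have hE : ∀ (v : ℝ × ℝ) (wi : ℝ × ℝ → V3) (a b : ℝ),
      (∀ u ∈ U, dot3 (wi u) (N' u) = 0) → DifferentiableAt ℝ wi q →
      wi q = a • w1 q + b • w2 q →
      dot3 (fderiv ℝ wi q v) (N' q) =
        - (ε * (a * dot3 (w1 q) (fderiv ℝ N q v) + b * dot3 (w2 q) (fderiv ℝ N q v))) := by
    intro v wi a b horth hwid hab
    rw [hzero N' wi horth hwid (hN'd q hq) v, hpdN' v, dot3_smul_right, hab, dot3_comb_left]
    try ring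
  have hdet' : (IIOmega w1' w2' q).det = 0 := by
    rw [IIOmega, Matrix.det_fin_two_of]
    unfold pd1 pd2
    rw [hE (1, 0) w1' a1 b1 horthN1' (hw1'd q hq) ha1,
        hE (0, 1) w1' a1 b1 horthN1' (hw1'd q hq) ha1,
        hE (1, 0) w2' a2 b2 horthN2' (hw2'd q hq) ha2,
        hE (0, 1) w2' a2 b2 horthN2' (hw2'd q hq) ha2]
    rw [← hP11, ← hP12, ← hP21, ← hP22]
    linear_combination (ε * ε * (a1 * b2 - a2 * b1)) * h0'
  exact hdet'

/-- For a proper frontal, the vanishing of the relative curvature `K_Ω`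
at a point is independent of the choice of tangent moving basis; consequently
non-parabolicity is independent of the tmb. -/
theorem statement0 (U : Set (ℝ × ℝ)) (x n w1 w2 w1' w2' : ℝ × ℝ → V3)
    (hfr : IsFrontal x n U) (hpr : IsProper x U)
    (hΩ : IsTMB x w1 w2 U) (hΩ' : IsTMB x w1' w2' U) :
    (∀ q ∈ U, relK w1 w2 q = 0 ↔ relK w1' w2' q = 0) ∧
    ((∀ q ∈ U, relK w1 w2 q ≠ 0) ↔ (∀ q ∈ U, relK w1' w2' q ≠ 0)) := by
  have hU : IsOpen U := hfr.1
  have hiff : ∀ q ∈ U, relK w1 w2 q = 0 ↔ relK w1' w2' q = 0 := by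
    intro q hq
    rw [relK_zero_iff (hΩ.2.2.1 q hq), relK_zero_iff (hΩ'.2.2.1 q hq)]
    exact ⟨key_det hU hpr hΩ hΩ' hq, key_det hU hpr hΩ' hΩ hq⟩
  refine ⟨hiff, ?_⟩
  constructor
  · intro h q hq h0
    exact h q hq ((hiff q hq).2 h0)
  · intro h q hq h0
    exact h q hq ((hiff q hq).1 h0)

end
end

section
/- Let x: U → ℝ³ be a non-parabolic frontal with tangent moving basis Ω = (w₁ w₂) and induced unit normal n, and let ξ: U → ℝ³ be a vector field transversal to x. Then the relative affine fundamental form induced by ξ is non-degenerate: the matrix (hᵢⱼ(q)) is invertible for every q ∈ U. -/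
open Matrix Topology Filter

noncomputable section

/-- Linearity of `dot3` in the first argument, for a 3-term combination. -/
lemma dot3_comb (a b e : ℝ) (u v w n : V3) :
    dot3 (a • u + b • v + e • w) n
      = a * dot3 u n + b * dot3 v n + e * dot3 w n := by
  simp [dot3]; ring

/-- The induced normal is orthogonal to both columns of the tmb. -/
lemma dot3_inducedNormal_left (w1 w2 : ℝ × ℝ → V3) (q : ℝ × ℝ) :
    dot3 (w1 q) (inducedNormal w1 w2 q) = 0 := by
  simp only [inducedNormal, dot3, cross3, Pi.smul_apply, smul_eq_mul]
  simp [Matrix.cons_val_zero, Matrix.cons_val_one]; ring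

lemma dot3_inducedNormal_right (w1 w2 : ℝ × ℝ → V3) (q : ℝ × ℝ) :
    dot3 (w2 q) (inducedNormal w1 w2 q) = 0 := by
  simp only [inducedNormal, dot3, cross3, Pi.smul_apply, smul_eq_mul]
  simp [Matrix.cons_val_zero, Matrix.cons_val_one]; ring

/-- For a non-parabolic frontal, the relative affine fundamental form
`(hᵢⱼ)` induced by any transversal vector field `ξ` is non-degenerate at every point. -/
theorem statement1 (U : Set (ℝ × ℝ)) (x w1 w2 ξ : ℝ × ℝ → V3)
    (hx : ContDiffOn ℝ (⊤ : ℕ∞) x U)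
    (hfr : IsFrontal x (inducedNormal w1 w2) U) (hpr : IsProper x U)
    (hΩ : IsTMB x w1 w2 U)
    (hnonpar : ∀ q ∈ U, relK w1 w2 q ≠ 0)
    (hξs : ContDiffOn ℝ (⊤ : ℕ∞) ξ U)
    (hξtrans : ∀ q ∈ U, ξ q ∉ Submodule.span ℝ {w1 q, w2 q})
    (D111 D211 D112 D212 D121 D221 D122 D222
      h11 h12 h21 h22 S11 S12 S21 S22 τ1 τ2 : ℝ × ℝ → ℝ)
    (hw1u1 : ∀ q ∈ U, pd1 w1 q = D111 q • w1 q + D211 q • w2 q + h11 q • ξ q)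
    (hw1u2 : ∀ q ∈ U, pd2 w1 q = D112 q • w1 q + D212 q • w2 q + h12 q • ξ q)
    (hw2u1 : ∀ q ∈ U, pd1 w2 q = D121 q • w1 q + D221 q • w2 q + h21 q • ξ q)
    (hw2u2 : ∀ q ∈ U, pd2 w2 q = D122 q • w1 q + D222 q • w2 q + h22 q • ξ q)
    (hξu1 : ∀ q ∈ U, pd1 ξ q = -(S11 q) • w1 q - S12 q • w2 q + τ1 q • ξ q)
    (hξu2 : ∀ q ∈ U, pd2 ξ q = -(S21 q) • w1 q - S22 q • w2 q + τ2 q • ξ q) :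
    ∀ q ∈ U, (!![h11 q, h12 q; h21 q, h22 q]).det ≠ 0 := by
  intro q hq
  have hK := hnonpar q hq
  set N := inducedNormal w1 w2 q with hN
  have hp1 : dot3 (w1 q) N = 0 := dot3_inducedNormal_left w1 w2 q
  have hp2 : dot3 (w2 q) N = 0 := dot3_inducedNormal_right w1 w2 q
  set c := dot3 (ξ q) N with hc
  have e11 : dot3 (pd1 w1 q) N = h11 q * c := by
    rw [hw1u1 q hq, dot3_comb, hp1, hp2]; ring
  have e12 : dot3 (pd2 w1 q) N = h12 q * c := by
    rw [hw1u2 q hq, dot3_comb, hp1, hp2]; ring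
  have e21 : dot3 (pd1 w2 q) N = h21 q * c := by
    rw [hw2u1 q hq, dot3_comb, hp1, hp2]; ring
  have e22 : dot3 (pd2 w2 q) N = h22 q * c := by
    rw [hw2u2 q hq, dot3_comb, hp1, hp2]; ring
  have hdet : (IIOmega w1 w2 q).det
      = c ^ 2 * (!![h11 q, h12 q; h21 q, h22 q]).det := by
    simp only [IIOmega, ← hN, Matrix.det_fin_two_of, e11, e12, e21, e22]
    ring
  have hK' : (IIOmega w1 w2 q).det ≠ 0 := by
    rw [relK, Matrix.det_mul] at hK
    have h1 := left_ne_zero_of_mul hK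
    rw [Matrix.det_neg, Matrix.det_transpose, Fintype.card_fin] at h1
    simpa using h1
  rw [hdet] at hK'
  exact right_ne_zero_of_mul hK'

end
end

section
/- Let x: U → ℝ³ be a proper frontal with tangent moving basis Ω = (w₁ w₂), Dx = ΩΛᵀ, and induced unit normal n, and let ξ = φn + a x_{u₁} + b x_{u₂} be an equiaffine transversal vector field with φ nowhere zero. With Γ̃₁, Γ̃₂ the matrices of the coefficients of the decomposition x_{uᵢuⱼ} = Γ̃¹ᵢⱼ x_{u₁} + Γ̃²ᵢⱼ x_{u₂} + cᵢⱼ ξ on U∖Σ(x) (Γ̃₁ := [[Γ̃¹₁₁,Γ̃²₁₁],[Γ̃¹₂₁,Γ̃²₂₁]], Γ̃₂ := [[Γ̃¹₂₁,Γ̃²₂₁],[Γ̃¹₂₂,Γ̃²₂₂]]), and 𝒟₁ := [[𝒟¹₁₁,𝒟²₁₁],[𝒟¹₂₁,𝒟²₂₁]], 𝒟₂ := [[𝒟¹₁₂,𝒟²₁₂],[𝒟¹₂₂,𝒟²₂₂]] the matrices of coefficients of the decomposition (wᵢ)_{uⱼ} = 𝒟¹ᵢⱼw₁ + 𝒟²ᵢⱼw₂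 + hᵢⱼξ, one has on U∖Σ(x): 𝒟₁ = Λ⁻¹(Γ̃₁Λ − Λ_{u₁}) and 𝒟₂ = Λ⁻¹(Γ̃₂Λ − Λ_{u₂}). -/
open Matrix Topology Filter

noncomputable section

/-- Uniqueness of coefficients with respect to a basis `{v, w, z}` where `v, w` are
linearly independent and `z` is not in their span. -/
lemma coeff_unique {v w z : V3} (hli : LinearIndependent ℝ ![v, w])
    (hz : z ∉ Submodule.span ℝ {v, w}) {a b c a' b' c' : ℝ}
    (h : a • v + b • w + c • z = a' • v + b' • w + c' • z) :
    a = a' ∧ b = b' := by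
  have key : (a - a') • v + (b - b') • w + (c - c') • z = 0 := by
    linear_combination (norm := module) h
  have hc : c = c' := by
    by_contra hne
    have hne' : c - c' ≠ 0 := sub_ne_zero.mpr hne
    apply hz
    refine Submodule.mem_span_pair.mpr
      ⟨(c - c')⁻¹ * (a' - a), (c - c')⁻¹ * (b' - b), ?_⟩
    have h2 : (c - c') • z = (a' - a) • v + (b' - b) • w := by
      linear_combination (norm := module) key
    have h3 : (c - c')⁻¹ • ((c - c') • z)
        = (c - c')⁻¹ • ((a' - a) • v + (b' - b) • w) := by rw [h2]
    rw [smul_smul, inv_mul_cancel₀ hne', one_smul] at h3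
    rw [h3]
    module
  have key2 : (a - a') • v + (b - b') • w = 0 := by
    rw [hc] at key
    linear_combination (norm := module) key
  obtain ⟨h1, h2⟩ := LinearIndependent.pair_iff.mp hli _ _ key2
  exact ⟨sub_eq_zero.mp h1, sub_eq_zero.mp h2⟩

/-- Product rule: directional derivative of a map that equals `f • v + g • w` on an
open set. -/
lemma pd_comb {U : Set (ℝ × ℝ)} (hU : IsOpen U) {q : ℝ × ℝ} (hq : q ∈ U)
    {f g : ℝ × ℝ → ℝ} {v w F : ℝ × ℝ → V3}
    (hF : ∀ u ∈ U, F u = f u • v u + g u • w u)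
    (hf : DifferentiableAt ℝ f q) (hg : DifferentiableAt ℝ g q)
    (hv : DifferentiableAt ℝ v q) (hw : DifferentiableAt ℝ w q) (d : ℝ × ℝ) :
    fderiv ℝ F q d = fderiv ℝ f q d • v q + f q • fderiv ℝ v q d
      + (fderiv ℝ g q d • w q + g q • fderiv ℝ w q d) := by
  have hev : F =ᶠ[𝓝 q] fun u => f u • v u + g u • w u :=
    Filter.eventually_of_mem (hU.mem_nhds hq) hF
  rw [hev.fderiv_eq, fderiv_fun_add (f := fun u => f u • v u) (g := fun u => g u • w u)
    (hf.smul hv) (hg.smul hw),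
    fderiv_fun_smul hf hv, fderiv_fun_smul hg hw]
  simp only [ContinuousLinearMap.add_apply, ContinuousLinearMap.smul_apply,
    ContinuousLinearMap.smulRight_apply]
  module

/-- Schwarz symmetry of second partial derivatives for a smooth map on an open set. -/
lemma schwarz {U : Set (ℝ × ℝ)} (hU : IsOpen U) {x : ℝ × ℝ → V3}
    (hx : ContDiffOn ℝ (⊤ : ℕ∞) x U) {q : ℝ × ℝ} (hq : q ∈ U) :
    pd1 (pd2 x) q = pd2 (pd1 x) q := by
  have hx' : ContDiffAt ℝ (⊤ : ℕ∞) x q := hx.contDiffAt (hU.mem_nhds hq)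
  have hd : DifferentiableAt ℝ (fderiv ℝ x) q :=
    (hx'.fderiv_right (m := 1) (WithTop.coe_le_coe.mpr le_top)).differentiableAt one_ne_zero
  have hsymm := hx'.isSymmSndFDerivAt (by rw [minSmoothness_of_isRCLikeNormedField]; exact WithTop.coe_le_coe.mpr le_top)
  have e1 : ∀ d e : ℝ × ℝ, fderiv ℝ (fun u => fderiv ℝ x u e) q d
      = fderiv ℝ (fderiv ℝ x) q d e := by
    intro d e
    rw [fderiv_clm_apply hd (differentiableAt_const e)]
    simp
  show fderiv ℝ (fun u => fderiv ℝ x u (0, 1)) q (1, 0)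
      = fderiv ℝ (fun u => fderiv ℝ x u (1, 0)) q (0, 1)
  rw [e1, e1, hsymm]

/-- For a proper frontal with `Dx = ΩΛᵀ` and an equiaffine transversal
field `ξ = φn + a x_{u₁} + b x_{u₂}`, on the regular part the coefficient matrices
satisfy `𝒟₁ = Λ⁻¹(Γ̃₁Λ − Λ_{u₁})` and `𝒟₂ = Λ⁻¹(Γ̃₂Λ − Λ_{u₂})`. -/
theorem statement12 (U : Set (ℝ × ℝ)) (x w1 w2 ξ : ℝ × ℝ → V3)
    (Λ : ℝ × ℝ → Matrix (Fin 2) (Fin 2) ℝ) (φ a b : ℝ × ℝ → ℝ)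
    (hx : ContDiffOn ℝ (⊤ : ℕ∞) x U)
    (hfr : IsFrontal x (inducedNormal w1 w2) U) (hpr : IsProper x U)
    (hΩ : IsTMB x w1 w2 U)
    (hΛs : ∀ i j, ContDiffOn ℝ (⊤ : ℕ∞) (fun u => Λ u i j) U)
    (hDx : ∀ q ∈ U,
      pd1 x q = Λ q 0 0 • w1 q + Λ q 0 1 • w2 q ∧
      pd2 x q = Λ q 1 0 • w1 q + Λ q 1 1 • w2 q)
    (hφs : ContDiffOn ℝ (⊤ : ℕ∞) φ U) (has : ContDiffOn ℝ (⊤ : ℕ∞) a U) (hbs : ContDiffOn ℝ (⊤ : ℕ∞) b U)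
    (hφ0 : ∀ q ∈ U, φ q ≠ 0)
    (hξs : ContDiffOn ℝ (⊤ : ℕ∞) ξ U)
    (hξdef : ∀ q ∈ U,
      ξ q = φ q • inducedNormal w1 w2 q + (a q • pd1 x q + b q • pd2 x q))
    (hξtrans : ∀ q ∈ U, ξ q ∉ Submodule.span ℝ {w1 q, w2 q})
    (hequiaffine : ∀ q ∈ U, pd1 ξ q ∈ Submodule.span ℝ {w1 q, w2 q} ∧
                            pd2 ξ q ∈ Submodule.span ℝ {w1 q, w2 q})
    (Gt111 Gt211 Gt121 Gt221 Gt122 Gt222 c11 c21 c22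
      D111 D211 D112 D212 D121 D221 D122 D222 h11 h12 h21 h22 : ℝ × ℝ → ℝ)
    (ht11 : ∀ q ∈ U \ SingSet x U, pd1 (pd1 x) q =
      Gt111 q • pd1 x q + Gt211 q • pd2 x q + c11 q • ξ q)
    (ht12 : ∀ q ∈ U \ SingSet x U, pd2 (pd1 x) q =
      Gt121 q • pd1 x q + Gt221 q • pd2 x q + c21 q • ξ q)
    (ht22 : ∀ q ∈ U \ SingSet x U, pd2 (pd2 x) q =
      Gt122 q • pd1 x q + Gt222 q • pd2 x q + c22 q • ξ q)
    (hw1u1 : ∀ q ∈ U, pd1 w1 q = D111 q • w1 q + D211 q • w2 q + h11 q • ξ q)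
    (hw1u2 : ∀ q ∈ U, pd2 w1 q = D112 q • w1 q + D212 q • w2 q + h12 q • ξ q)
    (hw2u1 : ∀ q ∈ U, pd1 w2 q = D121 q • w1 q + D221 q • w2 q + h21 q • ξ q)
    (hw2u2 : ∀ q ∈ U, pd2 w2 q = D122 q • w1 q + D222 q • w2 q + h22 q • ξ q) :
    ∀ q ∈ U \ SingSet x U,
      !![D111 q, D211 q; D121 q, D221 q] =
        (Λ q)⁻¹ * (!![Gt111 q, Gt211 q; Gt121 q, Gt221 q] * Λ q - pdMat1 Λ q) ∧
      !![D112 q, D212 q; D122 q, D222 q] =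
        (Λ q)⁻¹ * (!![Gt121 q, Gt221 q; Gt122 q, Gt222 q] * Λ q - pdMat2 Λ q) := by
  intro q hq
  obtain ⟨hq1, hq2⟩ := hq
  have hU : IsOpen U := hfr.1
  have hnq : 𝓝 q ≤ 𝓟 U := le_principal_iff.mpr (hU.mem_nhds hq1)
  -- linear independence of the partial derivatives at a regular point
  have hLIx : LinearIndependent ℝ ![pd1 x q, pd2 x q] := by
    by_contra h
    exact hq2 ⟨hq1, h⟩
  -- linear independence of w1, w2 and transversality of ξ at q
  have hliW : LinearIndependent ℝ ![w1 q, w2 q] := hΩ.2.2.1 q hq1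
  have hξq : ξ q ∉ Submodule.span ℝ {w1 q, w2 q} := hξtrans q hq1
  -- the determinant of Λ q is nonzero
  have hdet : IsUnit (Λ q).det := by
    rw [isUnit_iff_ne_zero]
    intro h0
    obtain ⟨v, hv0, hv⟩ := Matrix.exists_vecMul_eq_zero_iff.mpr h0
    have hv01 : v 0 * Λ q 0 0 + v 1 * Λ q 1 0 = 0 := by
      have := congrFun hv 0
      simpa [Matrix.vecMul, dotProduct, Fin.sum_univ_two] using this
    have hv02 : v 0 * Λ q 0 1 + v 1 * Λ q 1 1 = 0 := by
      have := congrFun hv 1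
      simpa [Matrix.vecMul, dotProduct, Fin.sum_univ_two] using this
    have hcomb : v 0 • pd1 x q + v 1 • pd2 x q = 0 := by
      rw [(hDx q hq1).1, (hDx q hq1).2]
      have : (v 0 * Λ q 0 0 + v 1 * Λ q 1 0) • w1 q
          + (v 0 * Λ q 0 1 + v 1 * Λ q 1 1) • w2 q
          = v 0 • (Λ q 0 0 • w1 q + Λ q 0 1 • w2 q)
            + v 1 • (Λ q 1 0 • w1 q + Λ q 1 1 • w2 q) := by module
      rw [← this, hv01, hv02, zero_smul, zero_smul, add_zero]
    obtain ⟨h1, h2⟩ := LinearIndependent.pair_iff.mp hLIx _ _ hcomb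
    apply hv0
    ext i
    fin_cases i
    · exact h1
    · exact h2
  -- differentiability facts at q
  have hdiff : ∀ {F : ℝ × ℝ → V3}, ContDiffOn ℝ (⊤ : ℕ∞) F U → DifferentiableAt ℝ F q :=
    fun h => (h.contDiffAt (hU.mem_nhds hq1)).differentiableAt (by simp)
  have hdW1 : DifferentiableAt ℝ w1 q := hdiff hΩ.1
  have hdW2 : DifferentiableAt ℝ w2 q := hdiff hΩ.2.1
  have hdΛ : ∀ i j, DifferentiableAt ℝ (fun u => Λ u i j) q := fun i j =>
    ((hΛs i j).contDiffAt (hU.mem_nhds hq1)).differentiableAt (by simp)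
  -- the four product-rule identities
  have E1 := pd_comb hU hq1 (fun u hu => (hDx u hu).1)
    (hdΛ 0 0) (hdΛ 0 1) hdW1 hdW2 (1, 0)
  have E2 := pd_comb hU hq1 (fun u hu => (hDx u hu).2)
    (hdΛ 1 0) (hdΛ 1 1) hdW1 hdW2 (1, 0)
  have E3 := pd_comb hU hq1 (fun u hu => (hDx u hu).1)
    (hdΛ 0 0) (hdΛ 0 1) hdW1 hdW2 (0, 1)
  have E4 := pd_comb hU hq1 (fun u hu => (hDx u hu).2)
    (hdΛ 1 0) (hdΛ 1 1) hdW1 hdW2 (0, 1)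
  -- abbreviations
  have hDx1 := (hDx q hq1).1
  have hDx2 := (hDx q hq1).2
  have hW11 := hw1u1 q hq1
  have hW12 := hw1u2 q hq1
  have hW21 := hw2u1 q hq1
  have hW22 := hw2u2 q hq1
  simp only [pd1, pd2] at hW11 hW12 hW21 hW22
  have hSch : fderiv ℝ (pd2 x) q (1, 0) = fderiv ℝ (pd1 x) q (0, 1) := by
    have := schwarz hU hx hq1
    simpa only [pd1, pd2] using this
  -- the four coefficient identities (each gives two scalar equations)
  have C1 : (pd1 (fun u => Λ u 0 0) q + (Λ q 0 0 * D111 q + Λ q 0 1 * D121 q)) • w1 q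
      + (pd1 (fun u => Λ u 0 1) q + (Λ q 0 0 * D211 q + Λ q 0 1 * D221 q)) • w2 q
      + (Λ q 0 0 * h11 q + Λ q 0 1 * h21 q) • ξ q
      = (Gt111 q * Λ q 0 0 + Gt211 q * Λ q 1 0) • w1 q
        + (Gt111 q * Λ q 0 1 + Gt211 q * Λ q 1 1) • w2 q + c11 q • ξ q := by
    have L := E1
    rw [hW11, hW21] at L
    have R := ht11 q ⟨hq1, hq2⟩
    rw [hDx1, hDx2] at R
    simp only [pd1, pd2] at R ⊢
    calc _ = fderiv ℝ (pd1 x) q (1, 0) := by rw [L]; module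
    _ = _ := by rw [R]; module
  have C2 : (pd1 (fun u => Λ u 1 0) q + (Λ q 1 0 * D111 q + Λ q 1 1 * D121 q)) • w1 q
      + (pd1 (fun u => Λ u 1 1) q + (Λ q 1 0 * D211 q + Λ q 1 1 * D221 q)) • w2 q
      + (Λ q 1 0 * h11 q + Λ q 1 1 * h21 q) • ξ q
      = (Gt121 q * Λ q 0 0 + Gt221 q * Λ q 1 0) • w1 q
        + (Gt121 q * Λ q 0 1 + Gt221 q * Λ q 1 1) • w2 q + c21 q • ξ q := by
    have L := E2
    rw [hW11, hW21] at L
    have R := ht12 q ⟨hq1, hq2⟩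
    rw [hDx1, hDx2] at R
    simp only [pd1, pd2] at R ⊢
    calc _ = fderiv ℝ (pd2 x) q (1, 0) := by rw [L]; module
    _ = fderiv ℝ (pd1 x) q (0, 1) := hSch
    _ = _ := by rw [R]; module
  have C3 : (pd2 (fun u => Λ u 0 0) q + (Λ q 0 0 * D112 q + Λ q 0 1 * D122 q)) • w1 q
      + (pd2 (fun u => Λ u 0 1) q + (Λ q 0 0 * D212 q + Λ q 0 1 * D222 q)) • w2 q
      + (Λ q 0 0 * h12 q + Λ q 0 1 * h22 q) • ξ q
      = (Gt121 q * Λ q 0 0 + Gt221 q * Λ q 1 0) • w1 q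
        + (Gt121 q * Λ q 0 1 + Gt221 q * Λ q 1 1) • w2 q + c21 q • ξ q := by
    have L := E3
    rw [hW12, hW22] at L
    have R := ht12 q ⟨hq1, hq2⟩
    rw [hDx1, hDx2] at R
    simp only [pd1, pd2] at R ⊢
    calc _ = fderiv ℝ (pd1 x) q (0, 1) := by rw [L]; module
    _ = _ := by rw [R]; module
  have C4 : (pd2 (fun u => Λ u 1 0) q + (Λ q 1 0 * D112 q + Λ q 1 1 * D122 q)) • w1 q
      + (pd2 (fun u => Λ u 1 1) q + (Λ q 1 0 * D212 q + Λ q 1 1 * D222 q)) • w2 q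
      + (Λ q 1 0 * h12 q + Λ q 1 1 * h22 q) • ξ q
      = (Gt122 q * Λ q 0 0 + Gt222 q * Λ q 1 0) • w1 q
        + (Gt122 q * Λ q 0 1 + Gt222 q * Λ q 1 1) • w2 q + c22 q • ξ q := by
    have L := E4
    rw [hW12, hW22] at L
    have R := ht22 q ⟨hq1, hq2⟩
    rw [hDx1, hDx2] at R
    simp only [pd1, pd2] at R ⊢
    calc _ = fderiv ℝ (pd2 x) q (0, 1) := by rw [L]; module
    _ = _ := by rw [R]; module
  obtain ⟨e11, e12⟩ := coeff_unique hliW hξq C1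
  obtain ⟨e21, e22⟩ := coeff_unique hliW hξq C2
  obtain ⟨e31, e32⟩ := coeff_unique hliW hξq C3
  obtain ⟨e41, e42⟩ := coeff_unique hliW hξq C4
  simp only [pd1, pd2] at e11 e12 e21 e22 e31 e32 e41 e42
  constructor
  · have hmain : Λ q * !![D111 q, D211 q; D121 q, D221 q]
        = !![Gt111 q, Gt211 q; Gt121 q, Gt221 q] * Λ q - pdMat1 Λ q := by
      ext i j
      fin_cases i <;> fin_cases j <;>
        simp only [Matrix.mul_apply, Fin.sum_univ_two, Matrix.sub_apply, pdMat1,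
          Matrix.of_apply, Matrix.cons_val', Matrix.cons_val_zero, Matrix.cons_val_one,
          Matrix.head_cons, Matrix.head_fin_const, Matrix.empty_val',
          Matrix.cons_val_fin_one, pd1, pd2, Fin.isValue, Fin.mk_zero, Fin.mk_one] <;> linarith [e11, e12, e21, e22]
    rw [← hmain, Matrix.nonsing_inv_mul_cancel_left _ _ hdet]
  · have hmain : Λ q * !![D112 q, D212 q; D122 q, D222 q]
        = !![Gt121 q, Gt221 q; Gt122 q, Gt222 q] * Λ q - pdMat2 Λ q := by
      ext i j
      fin_cases i <;> fin_cases j <;>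
        simp only [Matrix.mul_apply, Fin.sum_univ_two, Matrix.sub_apply, pdMat2,
          Matrix.of_apply, Matrix.cons_val', Matrix.cons_val_zero, Matrix.cons_val_one,
          Matrix.head_cons, Matrix.head_fin_const, Matrix.empty_val',
          Matrix.cons_val_fin_one, pd1, pd2, Fin.isValue, Fin.mk_zero, Fin.mk_one] <;> linarith [e31, e32, e41, e42]
    rw [← hmain, Matrix.nonsing_inv_mul_cancel_left _ _ hdet]

end
end
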